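/- Suppose U : ℝᵈ → ℝ is twice continuously differentiable with L-Lipschitz gradient, its Hessian is uniformly bounded in operator norm by a constant ϖ, U is coercive (U(q) → ∞ as ‖q‖ → ∞), U is a Morse function (every critical point of U has nondegenerate Hessian), and U satisfies the Polyak–Łojasiewicz condition: there exists μ > 0 such that ‖∇U(q)‖² ≥ μ (U(q) − U(q*)) for every q ∈ ℝᵈ and every critical point q* of U. Let S = {(q*, 0) ∈ ℝᵈ × ℝᵈ : ∇U(q*) = 0}. Then there exists a constant λ > 0, depending only on U, Σ, and γ, such that for every T > 0 and every curve z : [0, T] → ℝᵈ × ℝᵈ with z(0) = z₀ that satisfies the amplifying (repelling) dynamics on [0, T/2] and the conformal (attracting) dynamics on [T/2, T], the energy drift is bounded as |H(z(T)) − H(z₀)| ≤ (inf_{u,v ∈ S} |2 H(z(T/2)) − H(u) − H(v)|) · e^{−λ T / 2} + sup_{u,v ∈ S} |H(u) − H(v)|. -/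

import Mathlib

open Matrix

noncomputable section

/-- Action of a matrix on a vector in Euclidean space. -/
def mvec {d : ℕ} (A : Matrix (Fin d) (Fin d) ℝ) (p : EuclideanSpace ℝ (Fin d)) :
    EuclideanSpace ℝ (Fin d) :=
  WithLp.toLp 2 (A.mulVec p)

/-- The Hamiltonian `H(q, p) = U(q) + (1/2) pᵀ Σ⁻¹ p`, here `Sinv` denotes `Σ⁻¹`. -/
def Ham {d : ℕ} (U : EuclideanSpace ℝ (Fin d) → ℝ) (Sinv : Matrix (Fin d) (Fin d) ℝ)
    (q p : EuclideanSpace ℝ (Fin d)) : ℝ :=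
  U q + (1 / 2) * (p ⬝ᵥ mvec Sinv p)

/-- The critical set `S = {(q*, 0) : ∇U(q*) = 0}` of the Hamiltonian. -/
def critSet {d : ℕ} (U : EuclideanSpace ℝ (Fin d) → ℝ) :
    Set (EuclideanSpace ℝ (Fin d) × EuclideanSpace ℝ (Fin d)) :=
  {w | gradient U w.1 = 0 ∧ w.2 = 0}

/-!
All critical points of `U` lie on the level `c = min U`: coercivity yields a global minimiser
`x₀`, which is critical, and the Polyak–Łojasiewicz inequality at a critical point `q*` against
`x₀` gives `U q* ≤ U x₀`. So the infimum in the bound is `2 (H(z(T/2)) - c)` and the supremum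
is `0`.

Along the conformal dynamics the energy only dissipates at rate `γ ⟪p, Σ⁻¹ p⟫`, which does not
see `U - c`. Adding the cross term `ε ⟪∇U q, p⟫` (hypocoercivity) contributes `-ε ‖∇U q‖²`,
which PL turns into decay of `U - c`. For small `ε` the modified functional stays within a
factor `[3/4, 5/4]` of `H - c`, because `‖∇U‖² ≤ 4 (K + 1) (U - c)` for a function with
`K`-Lipschitz gradient bounded below by `c`, and it decays like `e^{-λt}` by Grönwall; hence
`H - c` decays like `2 e^{-λt}`. The amplifying half, run backwards with `p ↦ -p`, is a
conformal trajectory, so both `H(z 0) - c` and `H(z T) - c` are at most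
`2 (H(z(T/2)) - c) e^{-λT/2}`.
-/

open Set Filter Topology InnerProductSpace
open scoped RealInnerProductSpace Gradient

section Hypocoercivity

theorem le_mul_exp_of_hasDerivWithinAt_le {f f' : ℝ → ℝ} {a b lam : ℝ} (hab : a ≤ b)
    (hf : ∀ t ∈ Icc a b, HasDerivWithinAt f (f' t) (Icc a b) t)
    (hle : ∀ t ∈ Ico a b, f' t ≤ -lam * f t) :
    f b ≤ f a * Real.exp (-lam * (b - a)) := by
  have hslope : ∀ t ∈ Ico a b, ∀ r, f' t < r → ∃ᶠ z in 𝓝[>] t, (z - t)⁻¹ * (f z - f t) < r :=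
    fun t ht r hr => ((hf t (Ico_subset_Icc_self ht)).mono_of_mem_nhdsWithin
      (Icc_mem_nhdsGE_of_mem ht)).liminf_right_slope_le hr
  have := le_gronwallBound_of_liminf_deriv_right_le (K := -lam) (ε := 0)
    (fun t ht => (hf t ht).continuousWithinAt) hslope le_rfl
    (fun t ht => by rw [add_zero]; exact hle t ht) b ⟨hab, le_rfl⟩
  rwa [gronwallBound_ε0] at this

theorem eventually_mul_le (X : ℝ) {Y : ℝ} (hY : 0 < Y) : ∀ᶠ ε in 𝓝[>] (0 : ℝ), ε * X ≤ Y := by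
  have : Tendsto (fun ε : ℝ => ε * X) (𝓝 0) (𝓝 0) := by
    simpa using (tendsto_id (x := 𝓝 (0 : ℝ))).mul_const X
  exact nhdsWithin_le_nhds (this.eventually (eventually_le_nhds hY))

theorem HasDerivWithinAt.comp_add_sub {F : Type*} [NormedAddCommGroup F] [NormedSpace ℝ F]
    {f : ℝ → F} {f' : F} {a b t : ℝ} (hf : HasDerivWithinAt f f' (Icc a b) (a + b - t)) :
    HasDerivWithinAt (fun s => f (a + b - s)) (-f') (Icc a b) t := by
  have hmaps : MapsTo (fun s => a + b - s) (Icc a b) (Icc a b) := fun s hs =>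
    ⟨by linarith [hs.2], by linarith [hs.1]⟩
  simpa [Function.comp_def] using hf.scomp t ((hasDerivWithinAt_id t _).const_sub (a + b)) hmaps

variable {E : Type*} [NormedAddCommGroup E] [InnerProductSpace ℝ E]

theorem exists_pos_mul_sq_norm_le_inner_self [FiniteDimensional ℝ E] (A : E →L[ℝ] E)
    (hA : ∀ x ≠ 0, 0 < ⟪x, A x⟫) : ∃ α > 0, ∀ x, α * ‖x‖ ^ 2 ≤ ⟪x, A x⟫ := by
  rcases subsingleton_or_nontrivial E with hE | hE
  · exact ⟨1, one_pos, fun x => by simp [Subsingleton.elim x 0]⟩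
  obtain ⟨x₀, hx₀, hmin⟩ := (isCompact_sphere (0 : E) 1).exists_isMinOn
    (f := fun x => ⟪x, A x⟫) (NormedSpace.sphere_nonempty.2 zero_le_one) (by fun_prop)
  have hx₀ne : x₀ ≠ 0 := ne_zero_of_mem_unit_sphere ⟨x₀, hx₀⟩
  refine ⟨⟪x₀, A x₀⟫, hA x₀ hx₀ne, fun x => ?_⟩
  rcases eq_or_ne x 0 with rfl | hx
  · simp
  have hnx : 0 < ‖x‖ := norm_pos_iff.2 hx
  have hu : ‖x‖⁻¹ • x ∈ Metric.sphere (0 : E) 1 := by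
    simp [norm_smul, hnx.ne']
  have hscale : ⟪x, A x⟫ = ‖x‖ ^ 2 * ⟪‖x‖⁻¹ • x, A (‖x‖⁻¹ • x)⟫ := by
    rw [map_smul, real_inner_smul_left, real_inner_smul_right]
    field_simp
  rw [hscale, mul_comm]
  exact mul_le_mul_of_nonneg_left (hmin hu) (sq_nonneg _)

def energy (U : E → ℝ) (A : E →L[ℝ] E) (q p : E) : ℝ := U q + 1 / 2 * ⟪p, A p⟫

theorem energy_neg (U : E → ℝ) (A : E →L[ℝ] E) (q p : E) :
    energy U A q (-p) = energy U A q p := by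
  simp [energy]

theorem le_energy {U : E → ℝ} {A : E →L[ℝ] E} {c : ℝ} (hc : ∀ y, c ≤ U y)
    (hA : ∀ p, 0 ≤ ⟪p, A p⟫) (q p : E) : c ≤ energy U A q p := by
  rw [energy]; linarith [hc q, hA p]

variable [CompleteSpace E] {U : E → ℝ} {A : E →L[ℝ] E} {K : NNReal} {α γ c ε : ℝ}

theorem IsLocalMin.gradient_eq_zero {x : E} (h : IsLocalMin U x) : ∇ U x = 0 := by
  rw [gradient, h.fderiv_eq_zero, map_zero]

theorem le_add_inner_gradient_add_mul_sq (hU : Differentiable ℝ U)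
    (hlip : LipschitzWith K (∇ U)) (x v : E) :
    U (x + v) ≤ U x + ⟪∇ U x, v⟫ + K * ‖v‖ ^ 2 := by
  set f : E → ℝ := fun z => U z - ⟪∇ U x, z⟫
  have hf : ∀ z, HasFDerivAt f (toDual ℝ E (∇ U z) - innerSL ℝ (∇ U x)) z := fun z =>
    (hU z).hasGradientAt.hasFDerivAt.sub (innerSL ℝ (∇ U x)).hasFDerivAt
  have hbound : ∀ z ∈ Metric.closedBall x ‖v‖,
      ‖toDual ℝ E (∇ U z) - innerSL ℝ (∇ U x)‖ ≤ K * ‖v‖ := by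
    intro z hz
    have : toDual ℝ E (∇ U z) - innerSL ℝ (∇ U x) = toDual ℝ E (∇ U z - ∇ U x) := by
      ext w; simp
    rw [this, LinearIsometryEquiv.norm_map, ← dist_eq_norm]
    exact (hlip.dist_le_mul z x).trans (mul_le_mul_of_nonneg_left hz K.2)
  have := (convex_closedBall x ‖v‖).norm_image_sub_le_of_norm_hasFDerivWithin_le (y := x + v)
    (fun z _ => (hf z).hasFDerivWithinAt) hbound (Metric.mem_closedBall_self (norm_nonneg v))
    (by simp [dist_eq_norm])
  simp only [f, add_sub_cancel_left, inner_add_right] at this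
  rw [Real.norm_eq_abs] at this
  linarith [(abs_le.1 this).2]

theorem sq_norm_gradient_le (hU : Differentiable ℝ U) (hlip : LipschitzWith K (∇ U))
    (hc : ∀ y, c ≤ U y) (x : E) : ‖∇ U x‖ ^ 2 ≤ 4 * (K + 1) * (U x - c) := by
  set t : ℝ := (2 * (K + 1))⁻¹
  have ht : 0 < t := by positivity
  have hKt : K * t ≤ 1 / 2 := by
    rw [show K * t = K / (2 * (K + 1)) by ring, div_le_iff₀ (by positivity)]; linarith
  have := (hc _).trans (le_add_inner_gradient_add_mul_sq hU hlip x (-(t • ∇ U x)))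
  rw [inner_neg_right, real_inner_smul_right, real_inner_self_eq_norm_sq, norm_neg, norm_smul,
    Real.norm_of_nonneg ht.le] at this
  have key : t / 2 * ‖∇ U x‖ ^ 2 ≤ U x - c := by nlinarith [sq_nonneg ‖∇ U x‖]
  have htK : t * (2 * (K + 1)) = 1 := inv_mul_cancel₀ (by positivity)
  nlinarith [mul_le_mul_of_nonneg_left key (by positivity : (0 : ℝ) ≤ 4 * (K + 1))]

theorem hasDerivWithinAt_energy {q p : ℝ → E} {s : Set ℝ} {t : ℝ}
    (hA : (A : E →ₗ[ℝ] E).IsSymmetric) (hU : Differentiable ℝ U)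
    (hq : HasDerivWithinAt q (A (p t)) s t) (hp : HasDerivWithinAt p (-∇ U (q t) - γ • p t) s t) :
    HasDerivWithinAt (fun t => energy U A (q t) (p t)) (-γ * ⟪p t, A (p t)⟫) s t := by
  have hUq := (hU (q t)).hasGradientAt.hasFDerivAt.comp_hasDerivWithinAt t hq
  have hQ := hp.inner ℝ (A.hasFDerivAt.comp_hasDerivWithinAt t hp)
  refine (hUq.add (hQ.const_mul (1 / 2))).congr_deriv ?_
  have hsymm : ⟪p t, A (-∇ U (q t) - γ • p t)⟫ = ⟪-∇ U (q t) - γ • p t, A (p t)⟫ :=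
    (real_inner_comm _ _).trans (hA _ _)
  rw [Function.comp_apply, toDual_apply_apply, hsymm, inner_sub_left, inner_neg_left,
    real_inner_smul_left]
  ring

theorem hasDerivWithinAt_inner_gradient {q p : ℝ → E} {s : Set ℝ} {t : ℝ}
    (hU : Differentiable ℝ (∇ U))
    (hq : HasDerivWithinAt q (A (p t)) s t) (hp : HasDerivWithinAt p (-∇ U (q t) - γ • p t) s t) :
    HasDerivWithinAt (fun t => ⟪∇ U (q t), p t⟫)
      (⟪fderiv ℝ (∇ U) (q t) (A (p t)), p t⟫ - ‖∇ U (q t)‖ ^ 2 - γ * ⟪∇ U (q t), p t⟫) s t := by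
  refine (((hU (q t)).hasFDerivAt.comp_hasDerivWithinAt t hq).inner ℝ hp).congr_deriv ?_
  simp only [Function.comp_apply, inner_sub_right, inner_neg_right, real_inner_smul_right,
    real_inner_self_eq_norm_sq]
  ring

theorem hasDerivWithinAt_reflect_of_amplifying {a b : ℝ} {q p : ℝ → E}
    (hq : ∀ t ∈ Icc a b, HasDerivWithinAt q (A (p t)) (Icc a b) t)
    (hp : ∀ t ∈ Icc a b, HasDerivWithinAt p (-∇ U (q t) + γ • p t) (Icc a b) t) :
    (∀ t ∈ Icc a b, HasDerivWithinAt (fun s => q (a + b - s)) (A (-p (a + b - t))) (Icc a b) t) ∧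
    (∀ t ∈ Icc a b, HasDerivWithinAt (fun s => -p (a + b - s))
      (-∇ U (q (a + b - t)) - γ • -p (a + b - t)) (Icc a b) t) := by
  have hmem : ∀ t ∈ Icc a b, a + b - t ∈ Icc a b := fun t ht =>
    ⟨by linarith [ht.2], by linarith [ht.1]⟩
  refine ⟨fun t ht => ?_, fun t ht => ?_⟩
  · simpa using HasDerivWithinAt.comp_add_sub (hq _ (hmem t ht))
  · refine (HasDerivWithinAt.comp_add_sub (hp _ (hmem t ht))).neg.congr_deriv ?_
    rw [neg_neg, smul_neg, sub_neg_eq_add, neg_add_eq_sub]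

variable (U) in
def lyapunov (A : E →L[ℝ] E) (c ε : ℝ) (q p : E) : ℝ :=
  energy U A q p - c + ε * ⟪∇ U q, p⟫

variable (U) in
def lyapunovDeriv (A : E →L[ℝ] E) (γ ε : ℝ) (q p : E) : ℝ :=
  -γ * ⟪p, A p⟫ + ε * (⟪fderiv ℝ (∇ U) q (A p), p⟫ - ‖∇ U q‖ ^ 2 - γ * ⟪∇ U q, p⟫)

theorem hasDerivWithinAt_lyapunov {q p : ℝ → E} {s : Set ℝ} {t : ℝ}
    (hA : (A : E →ₗ[ℝ] E).IsSymmetric) (hU : ContDiff ℝ 2 U)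
    (hq : HasDerivWithinAt q (A (p t)) s t) (hp : HasDerivWithinAt p (-∇ U (q t) - γ • p t) s t) :
    HasDerivWithinAt (fun t => lyapunov U A c ε (q t) (p t))
      (lyapunovDeriv U A γ ε (q t) (p t)) s t := by
  have hgrad : Differentiable ℝ (∇ U) :=
    ((toDual ℝ E).symm.contDiff.comp (hU.fderiv_right le_rfl)).differentiable one_ne_zero
  exact (((hasDerivWithinAt_energy hA (hU.differentiable two_ne_zero) hq hp).sub_const c).add
    ((hasDerivWithinAt_inner_gradient hgrad hq hp).const_mul ε))

theorem abs_mul_inner_gradient_le (hU : Differentiable ℝ U) (hlip : LipschitzWith K (∇ U))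
    (hc : ∀ y, c ≤ U y) (hαA : ∀ p, α * ‖p‖ ^ 2 ≤ ⟪p, A p⟫) (hε : 0 ≤ ε)
    (hεK : ε * (8 * (K + 1)) ≤ 1) (hεα : ε * 4 ≤ α) (q p : E) :
    |ε * ⟪∇ U q, p⟫| ≤ (energy U A q p - c) / 4 := by
  have hCS := mul_le_mul_of_nonneg_left (abs_real_inner_le_norm (∇ U q) p) hε
  have hAMGM := mul_nonneg hε (sq_nonneg (‖∇ U q‖ - ‖p‖))
  have hdesc := mul_le_mul_of_nonneg_left (sq_norm_gradient_le hU hlip hc q) hε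
  have hεKu := mul_le_mul_of_nonneg_right hεK (sub_nonneg.2 (hc q))
  have hεαp := mul_le_mul_of_nonneg_right hεα (sq_nonneg ‖p‖)
  rw [abs_mul, abs_of_nonneg hε, energy]
  linarith [hαA p]

theorem lyapunovDeriv_le (hγ : 0 ≤ γ) (hlip : LipschitzWith K (∇ U))
    (hαA : ∀ p, α * ‖p‖ ^ 2 ≤ ⟪p, A p⟫) (hε : 0 ≤ ε)
    (hεγ : ε * (K * ‖A‖ + γ ^ 2 / 2) ≤ γ * α / 2) (q p : E) :
    lyapunovDeriv U A γ ε q p ≤ -(γ * α / 2) * ‖p‖ ^ 2 - ε / 2 * ‖∇ U q‖ ^ 2 := by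
  have hHess : ⟪fderiv ℝ (∇ U) q (A p), p⟫ ≤ K * ‖A‖ * ‖p‖ ^ 2 := calc
    _ ≤ ‖fderiv ℝ (∇ U) q (A p)‖ * ‖p‖ := real_inner_le_norm _ _
    _ ≤ K * (‖A‖ * ‖p‖) * ‖p‖ := by
      gcongr
      exact (ContinuousLinearMap.le_opNorm _ _).trans
        (mul_le_mul (norm_fderiv_le_of_lipschitz ℝ hlip) (A.le_opNorm p) (by positivity) K.2)
    _ = K * ‖A‖ * ‖p‖ ^ 2 := by ring
  have hCS := mul_le_mul_of_nonneg_left (neg_le_of_abs_le (abs_real_inner_le_norm (∇ U q) p))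
    (mul_nonneg hε hγ)
  have hAMGM := mul_nonneg hε (sq_nonneg (‖∇ U q‖ - γ * ‖p‖))
  have hεγp := mul_le_mul_of_nonneg_right hεγ (sq_nonneg ‖p‖)
  have hγQ := mul_le_mul_of_nonneg_left (hαA p) hγ
  have hεHess := mul_le_mul_of_nonneg_left hHess hε
  rw [lyapunovDeriv]
  linarith

theorem mul_lyapunov_le {μ lam : ℝ} (hU : Differentiable ℝ U) (hlip : LipschitzWith K (∇ U))
    (hc : ∀ y, c ≤ U y) (hPL : ∀ x, μ * (U x - c) ≤ ‖∇ U x‖ ^ 2)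
    (hαA : ∀ p, α * ‖p‖ ^ 2 ≤ ⟪p, A p⟫) (hε : 0 ≤ ε)
    (hεK : ε * (8 * (K + 1)) ≤ 1) (hεα : ε * 4 ≤ α) (hlam : 0 ≤ lam)
    (hlamA : lam * (5 * ‖A‖) ≤ 4 * (γ * α)) (hlamμ : lam * 5 ≤ 2 * (ε * μ)) (q p : E) :
    lam * lyapunov U A c ε q p ≤ γ * α / 2 * ‖p‖ ^ 2 + ε / 2 * ‖∇ U q‖ ^ 2 := by
  have hcross := (abs_le.1 (abs_mul_inner_gradient_le hU hlip hc hαA hε hεK hεα q p)).2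
  have hQ : ⟪p, A p⟫ ≤ ‖A‖ * ‖p‖ ^ 2 := calc
    _ ≤ ‖p‖ * ‖A p‖ := real_inner_le_norm _ _
    _ ≤ ‖p‖ * (‖A‖ * ‖p‖) := by gcongr; exact A.le_opNorm p
    _ = ‖A‖ * ‖p‖ ^ 2 := by ring
  have hL : lyapunov U A c ε q p ≤ 5 / 4 * ((U q - c) + 1 / 2 * ⟪p, A p⟫) := by
    rw [lyapunov]; rw [energy] at hcross ⊢; linarith
  have h1 := mul_le_mul_of_nonneg_left hL hlam
  have h2 := mul_le_mul_of_nonneg_right hlamμ (sub_nonneg.2 (hc q))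
  have h3 := mul_le_mul_of_nonneg_left (hPL q) hε
  have h4 := mul_le_mul_of_nonneg_left hQ hlam
  have h5 := mul_le_mul_of_nonneg_right hlamA (sq_nonneg ‖p‖)
  linarith

theorem exists_energy_decay {μ : ℝ} (hγ : 0 < γ) (hμ : 0 < μ) (hU : ContDiff ℝ 2 U)
    (hlip : LipschitzWith K (∇ U)) (hc : ∀ y, c ≤ U y)
    (hPL : ∀ x, μ * (U x - c) ≤ ‖∇ U x‖ ^ 2) (hA : (A : E →ₗ[ℝ] E).IsSymmetric) (hα : 0 < α)
    (hαA : ∀ p, α * ‖p‖ ^ 2 ≤ ⟪p, A p⟫) :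
    ∃ lam > 0, ∀ a b, a ≤ b → ∀ q p : ℝ → E,
      (∀ t ∈ Icc a b, HasDerivWithinAt q (A (p t)) (Icc a b) t) →
      (∀ t ∈ Icc a b, HasDerivWithinAt p (-∇ U (q t) - γ • p t) (Icc a b) t) →
      energy U A (q b) (p b) - c ≤
        2 * (energy U A (q a) (p a) - c) * Real.exp (-lam * (b - a)) := by
  have hU1 : Differentiable ℝ U := hU.differentiable two_ne_zero
  obtain ⟨ε, ⟨hεγ, hεK, hεα⟩, hε⟩ := ((eventually_mul_le (K * ‖A‖ + γ ^ 2 / 2)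
    (by positivity : 0 < γ * α / 2)).and ((eventually_mul_le (8 * (K + 1)) one_pos).and
    (eventually_mul_le 4 hα))).and self_mem_nhdsWithin |>.exists
  obtain ⟨lam, ⟨hlamA, hlamμ⟩, hlam⟩ := ((eventually_mul_le (5 * ‖A‖)
    (by positivity : 0 < 4 * (γ * α))).and (eventually_mul_le 5
    (by positivity : 0 < 2 * (ε * μ)))).and self_mem_nhdsWithin |>.exists
  refine ⟨lam, hlam, fun a b hab q p hq hp => ?_⟩
  have hdecay := le_mul_exp_of_hasDerivWithinAt_le (lam := lam) hab
    (fun t ht => hasDerivWithinAt_lyapunov (c := c) (ε := ε) hA hU (hq t ht) (hp t ht))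
    (fun t _ => by
      linarith [lyapunovDeriv_le hγ.le hlip hαA hε.le hεγ (q t) (p t),
        mul_lyapunov_le hU1 hlip hc hPL hαA hε.le hεK hεα hlam.le hlamA hlamμ (q t) (p t)])
  have hcross := fun t => abs_le.1
    (abs_mul_inner_gradient_le hU1 hlip hc hαA hε.le hεK hεα (q t) (p t))
  have hEa : 0 ≤ energy U A (q a) (p a) - c := sub_nonneg.2 (le_energy hc
    (fun p => (mul_nonneg hα.le (sq_nonneg ‖p‖)).trans (hαA p)) (q a) (p a))
  have hexp := Real.exp_pos (-lam * (b - a))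
  have ha := mul_le_mul_of_nonneg_right (hcross a).2 hexp.le
  simp only [lyapunov] at hdecay
  linarith [(hcross b).1, mul_nonneg hEa hexp.le]

end Hypocoercivity

theorem Ham_eq_energy {d : ℕ} (U : EuclideanSpace ℝ (Fin d) → ℝ) (M : Matrix (Fin d) (Fin d) ℝ)
    (q p : EuclideanSpace ℝ (Fin d)) :
    Ham U M q p = energy U (toEuclideanCLM (𝕜 := ℝ) M) q p := by
  simp [Ham, energy, mvec, EuclideanSpace.inner_eq_star_dotProduct, dotProduct_comm]

theorem Matrix.PosDef.isSymmetric_toEuclideanCLM {n : Type*} [Fintype n] [DecidableEq n]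
    {M : Matrix n n ℝ} (hM : M.PosDef) :
    ((toEuclideanCLM (𝕜 := ℝ) M : EuclideanSpace ℝ n →L[ℝ] EuclideanSpace ℝ n) :
      EuclideanSpace ℝ n →ₗ[ℝ] EuclideanSpace ℝ n).IsSymmetric :=
  isSymmetric_toEuclideanLin_iff.2 hM.isHermitian

theorem Matrix.PosDef.exists_pos_mul_sq_norm_le_inner {n : Type*} [Fintype n] [DecidableEq n]
    {M : Matrix n n ℝ} (hM : M.PosDef) :
    ∃ α > 0, ∀ x : EuclideanSpace ℝ n, α * ‖x‖ ^ 2 ≤ ⟪x, toEuclideanCLM (𝕜 := ℝ) M x⟫ :=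
  exists_pos_mul_sq_norm_le_inner_self _ fun x hx => by
    simpa [EuclideanSpace.inner_eq_star_dotProduct, dotProduct_comm] using
      hM.dotProduct_mulVec_pos (x := WithLp.ofLp x) (by rwa [Ne, WithLp.ofLp_eq_zero])

theorem Ham_eq_of_mem_critSet {d : ℕ} {U : EuclideanSpace ℝ (Fin d) → ℝ} {μ : ℝ} (hμ : 0 < μ)
    {x₀ : EuclideanSpace ℝ (Fin d)} (hmin : ∀ y, U x₀ ≤ U y)
    (hPL : ∀ q, μ * (U q - U x₀) ≤ ‖∇ U q‖ ^ 2) (M : Matrix (Fin d) (Fin d) ℝ)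
    {w : EuclideanSpace ℝ (Fin d) × EuclideanSpace ℝ (Fin d)} (hw : w ∈ critSet U) :
    Ham U M w.1 w.2 = U x₀ := by
  obtain ⟨hcrit, hzero⟩ := hw
  have := hPL w.1
  rw [hcrit, norm_zero, sq, mul_zero] at this
  rw [Ham, hzero]
  simp only [WithLp.ofLp_zero, zero_dotProduct, mul_zero, add_zero]
  nlinarith [hmin w.1]

theorem rahmc_energy_drift_bound_general
    (d : ℕ) (γ : ℝ) (hγ : 0 < γ)
    (U : EuclideanSpace ℝ (Fin d) → ℝ) (hU : ContDiff ℝ 2 U)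
    (K : NNReal) (hlip : LipschitzWith K (gradient U))
    (hcoercive : Filter.Tendsto U (Filter.comap (fun q => ‖q‖) Filter.atTop) Filter.atTop)
    (μ : ℝ) (hμ : 0 < μ)
    (hPL : ∀ q qstar : EuclideanSpace ℝ (Fin d), gradient U qstar = 0 →
      μ * (U q - U qstar) ≤ ‖gradient U q‖ ^ 2)
    (S : Matrix (Fin d) (Fin d) ℝ) (hSpd : S.PosDef) :
    ∃ lam > (0 : ℝ),
      ∀ T : ℝ, 0 < T →
      ∀ z : ℝ → EuclideanSpace ℝ (Fin d) × EuclideanSpace ℝ (Fin d),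
        (∀ t ∈ Set.Icc (0 : ℝ) (T / 2),
          HasDerivWithinAt (fun t => (z t).1) (mvec S⁻¹ (z t).2)
            (Set.Icc (0 : ℝ) (T / 2)) t ∧
          HasDerivWithinAt (fun t => (z t).2) (-gradient U (z t).1 + γ • (z t).2)
            (Set.Icc (0 : ℝ) (T / 2)) t) →
        (∀ t ∈ Set.Icc (T / 2) T,
          HasDerivWithinAt (fun t => (z t).1) (mvec S⁻¹ (z t).2)
            (Set.Icc (T / 2) T) t ∧
          HasDerivWithinAt (fun t => (z t).2) (-gradient U (z t).1 - γ • (z t).2)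
            (Set.Icc (T / 2) T) t) →
        |Ham U S⁻¹ (z T).1 (z T).2 - Ham U S⁻¹ (z 0).1 (z 0).2| ≤
          sInf ((fun uv :
              (EuclideanSpace ℝ (Fin d) × EuclideanSpace ℝ (Fin d)) ×
                (EuclideanSpace ℝ (Fin d) × EuclideanSpace ℝ (Fin d)) =>
            |2 * Ham U S⁻¹ (z (T / 2)).1 (z (T / 2)).2 -
              Ham U S⁻¹ uv.1.1 uv.1.2 - Ham U S⁻¹ uv.2.1 uv.2.2|) ''
              (critSet U ×ˢ critSet U)) * Real.exp (-lam * T / 2) +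
          sSup ((fun uv :
              (EuclideanSpace ℝ (Fin d) × EuclideanSpace ℝ (Fin d)) ×
                (EuclideanSpace ℝ (Fin d) × EuclideanSpace ℝ (Fin d)) =>
            |Ham U S⁻¹ uv.1.1 uv.1.2 - Ham U S⁻¹ uv.2.1 uv.2.2|) ''
              (critSet U ×ˢ critSet U)) := by
  obtain ⟨x₀, hmin⟩ := hU.continuous.exists_forall_le
    (by rwa [comap_norm_atTop, Metric.cobounded_eq_cocompact] at hcoercive)
  have hcrit : ∇ U x₀ = 0 := IsLocalMin.gradient_eq_zero (Eventually.of_forall hmin)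
  have hPL₀ := fun q => hPL q x₀ hcrit
  have hHam := fun w (hw : w ∈ critSet U) => Ham_eq_of_mem_critSet hμ hmin hPL₀ S⁻¹ hw
  obtain ⟨α, hα, hαA⟩ := hSpd.inv.exists_pos_mul_sq_norm_le_inner
  obtain ⟨lam, hlam, hdecay⟩ := exists_energy_decay hγ hμ hU hlip hmin hPL₀
    hSpd.inv.isSymmetric_toEuclideanCLM hα hαA
  refine ⟨lam, hlam, fun T hT z hamp hconf => ?_⟩
  have hne : (critSet U ×ˢ critSet U).Nonempty := ⟨((x₀, 0), (x₀, 0)), ⟨hcrit, rfl⟩, hcrit, rfl⟩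
  rw [image_congr fun uv huv => by rw [hHam _ huv.1, hHam _ huv.2], hne.image_const,
    image_congr fun uv huv => by rw [hHam _ huv.1, hHam _ huv.2], hne.image_const,
    csInf_singleton, csSup_singleton, sub_self, abs_zero, add_zero]
  have hlate := hdecay (T / 2) T (by linarith) _ _ (fun t ht => (hconf t ht).1)
    (fun t ht => (hconf t ht).2)
  obtain ⟨hq, hp⟩ := hasDerivWithinAt_reflect_of_amplifying (A := toEuclideanCLM (𝕜 := ℝ) S⁻¹)
    (fun t ht => (hamp t ht).1) (fun t ht => (hamp t ht).2)
  have hearly := hdecay 0 (T / 2) (by linarith) _ _ hq hp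
  simp only [zero_add, sub_self, sub_zero, energy_neg] at hearly
  simp only [Ham_eq_energy]
  have hE := fun t => le_energy (A := toEuclideanCLM (𝕜 := ℝ) S⁻¹) hmin
    (fun p => (mul_nonneg hα.le (sq_nonneg ‖p‖)).trans (hαA p)) (z t).1 (z t).2
  rw [show T - T / 2 = T / 2 by ring] at hlate
  rw [show -lam * T / 2 = -lam * (T / 2) by ring,
    abs_of_nonneg (a := 2 * _ - U x₀ - U x₀) (by linarith [hE (T / 2)]), abs_sub_le_iff]
  constructor <;> linarith [hE 0, hE T]

/-- **Bound on energy drift.** Suppose `U` is `C²` with Lipschitz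
gradient, Hessian uniformly bounded in operator norm by `ϖ`, coercive, Morse, and
satisfying the Polyak–Łojasiewicz condition with constant `μ > 0`. Then there exists
`λ > 0`, depending only on `U`, `Σ`, and `γ`, such that for every `T > 0` and every
curve `z` following the amplifying (repelling) dynamics on `[0, T/2]` and the conformal
(attracting) dynamics on `[T/2, T]`, the energy drift satisfies
`|H(z(T)) − H(z(0))| ≤ (inf_{u,v ∈ S} |2H(z(T/2)) − H(u) − H(v)|) e^{−λT/2}
  + sup_{u,v ∈ S} |H(u) − H(v)|`. -/
theorem rahmc_energy_drift_bound
    (d : ℕ) (hd : 1 ≤ d) (γ : ℝ) (hγ : 0 < γ)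
    (U : EuclideanSpace ℝ (Fin d) → ℝ) (hU : ContDiff ℝ 2 U)
    (K : NNReal) (hlip : LipschitzWith K (gradient U))
    (ϖ : ℝ) (hhess : ∀ x : EuclideanSpace ℝ (Fin d), ‖fderiv ℝ (gradient U) x‖ ≤ ϖ)
    (hcoercive : Filter.Tendsto U (Filter.comap (fun q => ‖q‖) Filter.atTop) Filter.atTop)
    (hmorse : ∀ q : EuclideanSpace ℝ (Fin d), gradient U q = 0 →
      Function.Bijective (fderiv ℝ (gradient U) q))
    (μ : ℝ) (hμ : 0 < μ)
    (hPL : ∀ q qstar : EuclideanSpace ℝ (Fin d), gradient U qstar = 0 →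
      μ * (U q - U qstar) ≤ ‖gradient U q‖ ^ 2)
    (S : Matrix (Fin d) (Fin d) ℝ) (hSsymm : S.IsSymm) (hSpd : S.PosDef) :
    ∃ lam > (0 : ℝ),
      ∀ T : ℝ, 0 < T →
      ∀ z : ℝ → EuclideanSpace ℝ (Fin d) × EuclideanSpace ℝ (Fin d),
        (∀ t ∈ Set.Icc (0 : ℝ) (T / 2),
          HasDerivWithinAt (fun t => (z t).1) (mvec S⁻¹ (z t).2)
            (Set.Icc (0 : ℝ) (T / 2)) t ∧
          HasDerivWithinAt (fun t => (z t).2) (-gradient U (z t).1 + γ • (z t).2)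
            (Set.Icc (0 : ℝ) (T / 2)) t) →
        (∀ t ∈ Set.Icc (T / 2) T,
          HasDerivWithinAt (fun t => (z t).1) (mvec S⁻¹ (z t).2)
            (Set.Icc (T / 2) T) t ∧
          HasDerivWithinAt (fun t => (z t).2) (-gradient U (z t).1 - γ • (z t).2)
            (Set.Icc (T / 2) T) t) →
        |Ham U S⁻¹ (z T).1 (z T).2 - Ham U S⁻¹ (z 0).1 (z 0).2| ≤
          sInf ((fun uv :
              (EuclideanSpace ℝ (Fin d) × EuclideanSpace ℝ (Fin d)) ×
                (EuclideanSpace ℝ (Fin d) × EuclideanSpace ℝ (Fin d)) =>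
            |2 * Ham U S⁻¹ (z (T / 2)).1 (z (T / 2)).2 -
              Ham U S⁻¹ uv.1.1 uv.1.2 - Ham U S⁻¹ uv.2.1 uv.2.2|) ''
              (critSet U ×ˢ critSet U)) * Real.exp (-lam * T / 2) +
          sSup ((fun uv :
              (EuclideanSpace ℝ (Fin d) × EuclideanSpace ℝ (Fin d)) ×
                (EuclideanSpace ℝ (Fin d) × EuclideanSpace ℝ (Fin d)) =>
            |Ham U S⁻¹ uv.1.1 uv.1.2 - Ham U S⁻¹ uv.2.1 uv.2.2|) ''
              (critSet U ×ˢ critSet U)) :=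
  rahmc_energy_drift_bound_general d γ hγ U hU K hlip hcoercive μ hμ hPL S hSpd
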